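/- Let n ≥ 3 be an integer, ξ ∈ ℝ, and η ∈ ℝ^{n-1}. Let a ∈ ℂ, u ∈ ℂ^{n-1}, w ∈ ℂ^{n-1}, and let A be a complex (n−1)×(n−1) matrix. Assume: (i) a + trace(A) = 0; (ii) (ξ − i)·a + ⟨η, u⟩ = 0 and (ξ − i)·w + A·η = 0; (iii) for every Y ∈ ℝ^{n-1} with |Y| = 1, writing c = ⟨Y, η⟩/(ξ² + 1), one has −(ξ − i)·c·a + ⟨Y, u⟩ − (ξ − i)²·c²·⟨Y, w⟩ + (ξ − i)·c·⟨Y, A·Y⟩ = 0; (iv) for every Y ∈ ℝ^{n-1} with |Y| = 1 and ⟨Y, η⟩ = 0, one has A·Y − ⟨Y, A·Y⟩·Y = 0. Then a = 0, u = 0, w = 0, and A = 0. -/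

import Mathlib

/-!
Write β = ξ - i, r = |η|, e = η / r and κ = r / (ξ² + 1), and eliminate w from (iii) using (ii).
For a unit vector Z ⊥ e, on the circle Y = s Z + t e (s² + t² = 1) equation (iii) becomes a
binary cubic form in (s, t) vanishing on the circle, so its four coefficients vanish. This gives
⟨Z, u⟩ = 0, ⟨Z, A·e⟩ = 0 and ⟨Z, A·Z⟩ = (1 + κ r) q with q = ⟨e, A·e⟩, while Y = e gives
a = κ r q. Together with (iv), A is q on e and (1 + κ r) q on e^⊥, so the trace condition reads
(n - 1)(1 + κ r) q = 0. Hence q = 0, and everything vanishes. When η = 0, (iv) makes every unit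
vector an eigenvector of A, so A is a trace-free scalar matrix.
-/

open scoped RealInnerProductSpace
open Complex

/-- The pairing `⟨Y, v⟩ = ∑ j, Y j * v j` of a real vector `Y` with a complex vector `v`. -/
noncomputable def cpair {m : ℕ} (Y : EuclideanSpace ℝ (Fin m))
    (v : EuclideanSpace ℂ (Fin m)) : ℂ :=
  ∑ j, (Y j : ℂ) * v j

/-- Action of a complex matrix on a real Euclidean vector. -/
noncomputable def mulEC {m : ℕ} (A : Matrix (Fin m) (Fin m) ℂ)
    (Y : EuclideanSpace ℝ (Fin m)) : EuclideanSpace ℂ (Fin m) :=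
  WithLp.toLp 2 (fun i => ∑ j, A i j * (Y j : ℂ))

/-- The quadratic form `⟨Y, A·Y⟩ = ∑ i j, Y i * A i j * Y j`. -/
noncomputable def cquad {m : ℕ} (A : Matrix (Fin m) (Fin m) ℂ)
    (Y : EuclideanSpace ℝ (Fin m)) : ℂ :=
  ∑ i, ∑ j, (Y i : ℂ) * A i j * (Y j : ℂ)

/-- A real vector regarded as a complex vector. -/
noncomputable def toC {m : ℕ} (Y : EuclideanSpace ℝ (Fin m)) :
    EuclideanSpace ℂ (Fin m) :=
  WithLp.toLp 2 (fun j => (Y j : ℂ))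

section Linearity

variable {m : ℕ}

@[simp]
lemma cpair_add_left (X Y : EuclideanSpace ℝ (Fin m)) (v : EuclideanSpace ℂ (Fin m)) :
    cpair (X + Y) v = cpair X v + cpair Y v := by
  simp only [cpair, PiLp.add_apply, Complex.ofReal_add, add_mul, Finset.sum_add_distrib]

@[simp]
lemma cpair_smul_left (c : ℝ) (Y : EuclideanSpace ℝ (Fin m)) (v : EuclideanSpace ℂ (Fin m)) :
    cpair (c • Y) v = c * cpair Y v := by
  simp only [cpair, PiLp.smul_apply, smul_eq_mul, Complex.ofReal_mul, Finset.mul_sum, mul_assoc]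

@[simp]
lemma cpair_add_right (Y : EuclideanSpace ℝ (Fin m)) (v v' : EuclideanSpace ℂ (Fin m)) :
    cpair Y (v + v') = cpair Y v + cpair Y v' := by
  simp only [cpair, PiLp.add_apply, mul_add, Finset.sum_add_distrib]

@[simp]
lemma cpair_smul_right (c : ℂ) (Y : EuclideanSpace ℝ (Fin m)) (v : EuclideanSpace ℂ (Fin m)) :
    cpair Y (c • v) = c * cpair Y v := by
  simp only [cpair, PiLp.smul_apply, smul_eq_mul, Finset.mul_sum, mul_left_comm]

@[simp]
lemma cpair_zero_left (v : EuclideanSpace ℂ (Fin m)) : cpair 0 v = 0 := by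
  simp [cpair]

@[simp]
lemma cpair_zero_right (Y : EuclideanSpace ℝ (Fin m)) : cpair Y 0 = 0 := by
  simp [cpair]

lemma cpair_single (i : Fin m) (v : EuclideanSpace ℂ (Fin m)) :
    cpair (EuclideanSpace.single i 1) v = v i := by
  simp [cpair, apply_ite Complex.ofReal, ite_mul]

lemma cpair_toC (X Y : EuclideanSpace ℝ (Fin m)) : cpair X (toC Y) = ⟪X, Y⟫ := by
  simp [cpair, toC, PiLp.inner_apply, mul_comm]

@[simp]
lemma toC_add (X Y : EuclideanSpace ℝ (Fin m)) : toC (X + Y) = toC X + toC Y := by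
  ext; simp [toC]

@[simp]
lemma toC_smul (c : ℝ) (Y : EuclideanSpace ℝ (Fin m)) : toC (c • Y) = (c : ℂ) • toC Y := by
  ext; simp [toC]

@[simp]
lemma toC_zero : toC (0 : EuclideanSpace ℝ (Fin m)) = 0 := by
  ext; simp [toC]

@[simp]
lemma mulEC_add (A : Matrix (Fin m) (Fin m) ℂ) (X Y : EuclideanSpace ℝ (Fin m)) :
    mulEC A (X + Y) = mulEC A X + mulEC A Y := by
  ext; simp [mulEC, mul_add, Finset.sum_add_distrib]

@[simp]
lemma mulEC_smul (A : Matrix (Fin m) (Fin m) ℂ) (c : ℝ) (Y : EuclideanSpace ℝ (Fin m)) :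
    mulEC A (c • Y) = (c : ℂ) • mulEC A Y := by
  ext; simp [mulEC, Finset.mul_sum, mul_left_comm]

@[simp]
lemma mulEC_zero_right (A : Matrix (Fin m) (Fin m) ℂ) : mulEC A 0 = 0 := by
  ext; simp [mulEC]

@[simp]
lemma mulEC_zero_left (Y : EuclideanSpace ℝ (Fin m)) : mulEC 0 Y = 0 := by
  ext; simp [mulEC]

lemma mulEC_single (A : Matrix (Fin m) (Fin m) ℂ) (i j : Fin m) :
    mulEC A (EuclideanSpace.single j 1) i = A i j := by
  simp [mulEC, apply_ite Complex.ofReal, mul_ite]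

lemma cquad_eq_cpair_mulEC (A : Matrix (Fin m) (Fin m) ℂ) (Y : EuclideanSpace ℝ (Fin m)) :
    cquad A Y = cpair Y (mulEC A Y) := by
  simp [cquad, cpair, mulEC, Finset.mul_sum, mul_assoc]

end Linearity

section Orthogonal

variable {E : Type*} [NormedAddCommGroup E] [InnerProductSpace ℝ E] {e : E}

lemma norm_smul_add_smul_eq_one {Z : E} (hZ : ‖Z‖ = 1) (he : ‖e‖ = 1) (hZe : ⟪Z, e⟫ = 0)
    {s t : ℝ} (hst : s ^ 2 + t ^ 2 = 1) : ‖s • Z + t • e‖ = 1 := by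
  rw [← pow_eq_one_iff_of_nonneg (norm_nonneg _) two_ne_zero, norm_add_sq_real, norm_smul,
    norm_smul, real_inner_smul_left, real_inner_smul_right, hZe, hZ, he]
  simpa using hst

lemma exists_inner_eq_zero_eq_smul_add (he : ‖e‖ = 1) (X : E) :
    ∃ Z, ⟪Z, e⟫ = 0 ∧ X = ⟪X, e⟫ • e + Z :=
  ⟨X - ⟪X, e⟫ • e, by simp [inner_sub_left, real_inner_smul_left, he], by abel⟩

lemma forall_inner_eq_zero_of_norm_eq_one {P : E → Prop} (h0 : P 0)
    (hsmul : ∀ (c : ℝ) Z, P Z → P (c • Z)) (h : ∀ Z, ‖Z‖ = 1 → ⟪Z, e⟫ = 0 → P Z)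
    {Z : E} (hZe : ⟪Z, e⟫ = 0) : P Z := by
  rcases eq_or_ne Z 0 with rfl | hZ
  · exact h0
  · rw [← smul_inv_smul₀ (norm_ne_zero_iff.mpr hZ) Z]
    exact hsmul _ _ (h _ (norm_smul_inv_norm hZ) (by rw [real_inner_smul_left, hZe, mul_zero]))

end Orthogonal

section UnitVector

variable {m : ℕ} {e : EuclideanSpace ℝ (Fin m)}

lemma eq_cpair_smul_toC (he : ‖e‖ = 1) {v : EuclideanSpace ℂ (Fin m)}
    (hv : ∀ Z, ⟪Z, e⟫ = 0 → cpair Z v = 0) : v = cpair e v • toC e := by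
  ext i
  obtain ⟨Z, hZe, hZ⟩ := exists_inner_eq_zero_eq_smul_add he (EuclideanSpace.single i 1)
  rw [← cpair_single, hZ, cpair_add_left, cpair_smul_left, hv Z hZe]
  simp [toC, EuclideanSpace.inner_single_left, mul_comm]

lemma eq_smul_one_add_smul_vecMulVec (he : ‖e‖ = 1) {A : Matrix (Fin m) (Fin m) ℂ} {q l : ℂ}
    (hAe : mulEC A e = q • toC e) (hAZ : ∀ Z, ⟪Z, e⟫ = 0 → mulEC A Z = l • toC Z) :
    A = l • 1 + (q - l) • Matrix.vecMulVec (toC e).ofLp (toC e).ofLp := by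
  ext i j
  obtain ⟨Z, hZe, hZ⟩ := exists_inner_eq_zero_eq_smul_add he (EuclideanSpace.single j 1)
  have hZ' : toC Z = toC (EuclideanSpace.single j 1) - (e j : ℂ) • toC e := by
    rw [hZ]; simp [EuclideanSpace.inner_single_left]
  rw [← mulEC_single A i j, hZ, mulEC_add, mulEC_smul, hAe, hAZ Z hZe, hZ']
  simp [toC, EuclideanSpace.inner_single_left, Matrix.one_apply, Matrix.vecMulVec_apply,
    PiLp.single_apply]
  split_ifs <;> push_cast <;> ring

lemma trace_eq_of_eq_smul_one_add_smul_vecMulVec (he : ‖e‖ = 1) {A : Matrix (Fin m) (Fin m) ℂ}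
    {q l : ℂ}
    (hA : A = l • 1 + (q - l) • Matrix.vecMulVec (toC e).ofLp (toC e).ofLp) :
    A.trace = m * l + (q - l) := by
  have hee : (toC e).ofLp ⬝ᵥ (toC e).ofLp = 1 := by
    change cpair e (toC e) = 1
    simp [cpair_toC, he]
  simp [hA, Matrix.trace_add, hee, mul_comm]

end UnitVector

section Eigen

variable {m : ℕ} {A : Matrix (Fin m) (Fin m) ℂ}

lemma cquad_eq_of_forall_eigen (h : ∀ Y, ‖Y‖ = 1 → mulEC A Y = cquad A Y • toC Y)
    {Z e : EuclideanSpace ℝ (Fin m)} (hZ : ‖Z‖ = 1) (he : ‖e‖ = 1) (hZe : ⟪Z, e⟫ = 0) :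
    cquad A Z = cquad A e := by
  have hY := h _ (norm_smul_add_smul_eq_one hZ he hZe (s := 3 / 5) (t := 4 / 5) (by norm_num))
  rw [mulEC_add, mulEC_smul, mulEC_smul, h Z hZ, h e he] at hY
  have hYZ := congrArg (cpair Z) hY
  have hYe := congrArg (cpair e) hY
  have heZ : ⟪e, Z⟫ = 0 := by rwa [real_inner_comm]
  simp only [cpair_add_right, cpair_smul_right, cpair_toC, toC_add, toC_smul, hZe, heZ,
    real_inner_self_eq_norm_sq, hZ, he] at hYZ hYe
  push_cast at hYZ hYe
  linear_combination (5 / 3 : ℂ) * hYZ - (5 / 4 : ℂ) * hYe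

lemma eq_zero_of_trace_eq_zero_of_forall_eigen (hm : 0 < m) (htr : A.trace = 0)
    (h : ∀ Y, ‖Y‖ = 1 → mulEC A Y = cquad A Y • toC Y) : A = 0 := by
  set e : EuclideanSpace ℝ (Fin m) := EuclideanSpace.single ⟨0, hm⟩ 1
  have he : ‖e‖ = 1 := by simp [e]
  have hAZ : ∀ Z, ⟪Z, e⟫ = 0 → mulEC A Z = cquad A e • toC Z := by
    intro Z hZe
    refine forall_inner_eq_zero_of_norm_eq_one (P := fun Z => mulEC A Z = cquad A e • toC Z)
      (by simp) (fun c Z hZ => ?_) (fun Z hZ hZe => ?_) hZe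
    · rw [mulEC_smul, hZ, toC_smul, smul_comm]
    · rw [h Z hZ, cquad_eq_of_forall_eigen h hZ he hZe]
  have hA := eq_smul_one_add_smul_vecMulVec he (h e he) hAZ
  have hq : cquad A e = 0 := by
    simpa [trace_eq_of_eq_smul_one_add_smul_vecMulVec he hA, hm.ne'] using htr
  simpa [hq] using hA

end Eigen

lemma binary_cubic_eq_zero {c₃ c₂ c₁ c₀ : ℂ}
    (h : ∀ s t : ℝ, s ^ 2 + t ^ 2 = 1 →
      c₃ * s ^ 3 + c₂ * s ^ 2 * t + c₁ * s * t ^ 2 + c₀ * t ^ 3 = 0) :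
    c₃ = 0 ∧ c₂ = 0 ∧ c₁ = 0 ∧ c₀ = 0 := by
  have h₁₀ := h 1 0 (by norm_num)
  have h₀₁ := h 0 1 (by norm_num)
  have hpos := h (4 / 5) (3 / 5) (by norm_num)
  have hneg := h (-4 / 5) (3 / 5) (by norm_num)
  push_cast at h₁₀ h₀₁ hpos hneg
  refine ⟨by linear_combination h₁₀, ?_, ?_, by linear_combination h₀₁⟩
  · linear_combination (125 / 96 : ℂ) * (hpos + hneg) - (27 / 48 : ℂ) * h₀₁
  · linear_combination (125 / 72 : ℂ) * (hpos - hneg) - (64 / 36 : ℂ) * h₁₀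

section ReducedSymbol

variable {m : ℕ} {A : Matrix (Fin m) (Fin m) ℂ} {a β : ℂ} {u : EuclideanSpace ℂ (Fin m)}
  {κ r : ℝ} {e : EuclideanSpace ℝ (Fin m)}

/-- Equation (iii) with `β = ξ - I`, after eliminating `w` by (ii), when `η = r • e` with
`‖e‖ = 1` and `κ = r / (ξ ^ 2 + 1)`, so that `⟪Y, η⟫ / (ξ ^ 2 + 1) = κ * ⟪Y, e⟫`. -/
noncomputable def reducedSymbol (β a : ℂ) (u : EuclideanSpace ℂ (Fin m))
    (A : Matrix (Fin m) (Fin m) ℂ) (κ r : ℝ) (e Y : EuclideanSpace ℝ (Fin m)) : ℂ :=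
  -(β * (κ * ⟪Y, e⟫ : ℝ)) * a + cpair Y u
    + β * ((κ * ⟪Y, e⟫ : ℝ) : ℂ) ^ 2 * r * cpair Y (mulEC A e)
    + β * (κ * ⟪Y, e⟫ : ℝ) * cquad A Y

lemma cpair_eq_zero_and_cquad_eq_of_reduced_symbol (hβ : β ≠ 0) (hκ : 0 < κ) (hr : 0 ≤ r)
    (he : ‖e‖ = 1) (hsymb : ∀ Y, ‖Y‖ = 1 → reducedSymbol β a u A κ r e Y = 0)
    {Z : EuclideanSpace ℝ (Fin m)} (hZ : ‖Z‖ = 1) (hZe : ⟪Z, e⟫ = 0)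
    (hAZ : mulEC A Z = cquad A Z • toC Z) :
    cpair Z u = 0 ∧ cpair Z (mulEC A e) = 0 ∧ cquad A Z = (1 + κ * r) * cquad A e := by
  have heZ : ⟪e, Z⟫ = 0 := by rwa [real_inner_comm]
  have hp₂ : cpair e (mulEC A Z) = 0 := by simp [hAZ, cpair_toC, heZ]
  have hcubic : ∀ s t : ℝ, s ^ 2 + t ^ 2 = 1 →
      cpair Z u * s ^ 3 + (-β * κ * a + cpair e u + β * κ * cquad A Z) * s ^ 2 * t
      + (cpair Z u + β * κ ^ 2 * r * cpair Z (mulEC A e)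
          + β * κ * (cpair Z (mulEC A e) + cpair e (mulEC A Z))) * s * t ^ 2
      + (-β * κ * a + cpair e u + β * κ ^ 2 * r * cquad A e + β * κ * cquad A e) * t ^ 3
      = 0 := by
    intro s t hst
    have hY := hsymb _ (norm_smul_add_smul_eq_one hZ he hZe hst)
    simp only [reducedSymbol, inner_add_left, real_inner_smul_left, hZe,
      real_inner_self_eq_norm_sq, he, cquad_eq_cpair_mulEC, cpair_add_left, cpair_smul_left, mulEC_add, mulEC_smul,
      cpair_add_right, cpair_smul_right] at hY
    rw [← cquad_eq_cpair_mulEC, ← cquad_eq_cpair_mulEC] at hY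
    push_cast at hY
    have hst' : (s : ℂ) ^ 2 + (t : ℂ) ^ 2 = 1 := by exact_mod_cast hst
    linear_combination hY + (-β * κ * a * t + s * cpair Z u + t * cpair e u) * hst'
  obtain ⟨huZ, h₂, h₁, h₀⟩ := binary_cubic_eq_zero hcubic
  have hβκ : β * κ ≠ 0 := mul_ne_zero hβ (by exact_mod_cast hκ.ne')
  have hκr : (1 + κ * r : ℂ) ≠ 0 := by exact_mod_cast (by positivity : 0 < 1 + κ * r).ne'
  refine ⟨huZ, ?_, ?_⟩
  · have h : β * κ * (1 + κ * r) * cpair Z (mulEC A e) = 0 := by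
      linear_combination h₁ - huZ - β * κ * hp₂
    simpa [hβκ, hκr] using h
  · have h : β * κ * (cquad A Z - (1 + κ * r) * cquad A e) = 0 := by
      linear_combination h₂ - h₀
    simpa [hβκ, sub_eq_zero] using h

lemma eq_mul_cquad_of_reduced_symbol (hβ : β ≠ 0) (hκ : 0 < κ) (hr : 0 ≤ r) (he : ‖e‖ = 1)
    (hgauge : β * a + r * cpair e u = 0)
    (hsymb : ∀ Y, ‖Y‖ = 1 → reducedSymbol β a u A κ r e Y = 0) :
    a = κ * r * cquad A e := by
  have hY := hsymb e he
  rw [reducedSymbol, real_inner_self_eq_norm_sq, he, ← cquad_eq_cpair_mulEC] at hY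
  push_cast at hY
  have hκr : (1 + κ * r : ℂ) ≠ 0 := by exact_mod_cast (by positivity : 0 < 1 + κ * r).ne'
  have h : β * (1 + κ * r) * (κ * r * cquad A e - a) = 0 := by
    linear_combination r * hY - hgauge
  simpa [hβ, hκr, sub_eq_zero, eq_comm] using h

lemma eq_zero_of_reduced_symbol (hm : 0 < m) (hβ : β ≠ 0) (hκ : 0 < κ) (hr : 0 < r)
    (he : ‖e‖ = 1) (htrace : a + A.trace = 0) (hgauge : β * a + r * cpair e u = 0)
    (hsymb : ∀ Y, ‖Y‖ = 1 → reducedSymbol β a u A κ r e Y = 0)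
    (heigen : ∀ Y, ‖Y‖ = 1 → ⟪Y, e⟫ = 0 → mulEC A Y = cquad A Y • toC Y) :
    a = 0 ∧ u = 0 ∧ A = 0 := by
  have ha := eq_mul_cquad_of_reduced_symbol hβ hκ hr.le he hgauge hsymb
  set q := cquad A e
  have horth : ∀ Z, ⟪Z, e⟫ = 0 → cpair Z u = 0 ∧ cpair Z (mulEC A e) = 0 ∧
      mulEC A Z = ((1 + κ * r) * q) • toC Z := by
    intro Z hZe
    refine forall_inner_eq_zero_of_norm_eq_one (P := fun Z => cpair Z u = 0 ∧
      cpair Z (mulEC A e) = 0 ∧ mulEC A Z = ((1 + κ * r) * q) • toC Z)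
      (by simp) (fun c Z ⟨hu, hp, hA⟩ => ?_) (fun Z hZ hZe => ?_) hZe
    · simp [hu, hp, hA, smul_comm (c : ℂ)]
    · obtain ⟨hu, hp, hq⟩ :=
        cpair_eq_zero_and_cquad_eq_of_reduced_symbol hβ hκ hr.le he hsymb hZ hZe (heigen Z hZ hZe)
      exact ⟨hu, hp, by rw [heigen Z hZ hZe, hq]⟩
  have hAe : mulEC A e = q • toC e := by
    rw [eq_cpair_smul_toC he fun Z hZe => (horth Z hZe).2.1, ← cquad_eq_cpair_mulEC]
  have hA := eq_smul_one_add_smul_vecMulVec he hAe fun Z hZe => (horth Z hZe).2.2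
  have hq : q = 0 := by
    have hκr : (1 + κ * r : ℂ) ≠ 0 := by exact_mod_cast (by positivity : 0 < 1 + κ * r).ne'
    have h : (m * (1 + κ * r)) * q = 0 := by
      linear_combination htrace - ha - trace_eq_of_eq_smul_one_add_smul_vecMulVec he hA
    simpa [hm.ne', hκr] using h
  have ha0 : a = 0 := by rw [ha, hq, mul_zero]
  refine ⟨ha0, ?_, by simpa [hq] using hA⟩
  have hue : cpair e u = 0 := by simpa [ha0, hr.ne'] using hgauge
  rw [eq_cpair_smul_toC he fun Z hZe => (horth Z hZe).1, hue, zero_smul]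

end ReducedSymbol

theorem stmt_5 (n : ℕ) (hn : 3 ≤ n)
    (ξ : ℝ) (η : EuclideanSpace ℝ (Fin (n - 1)))
    (a : ℂ) (u w : EuclideanSpace ℂ (Fin (n - 1)))
    (A : Matrix (Fin (n - 1)) (Fin (n - 1)) ℂ)
    (htrace : a + A.trace = 0)
    (hgauge1 : ((ξ : ℂ) - I) * a + cpair η u = 0)
    (hgauge2 : (((ξ : ℂ) - I)) • w + mulEC A η = 0)
    (h3 : ∀ Y : EuclideanSpace ℝ (Fin (n - 1)), ‖Y‖ = 1 →
      -(((ξ : ℂ) - I) * ((⟪Y, η⟫ / (ξ ^ 2 + 1) : ℝ) : ℂ)) * a + cpair Y u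
        - ((ξ : ℂ) - I) ^ 2 * ((⟪Y, η⟫ / (ξ ^ 2 + 1) : ℝ) : ℂ) ^ 2 * cpair Y w
        + ((ξ : ℂ) - I) * ((⟪Y, η⟫ / (ξ ^ 2 + 1) : ℝ) : ℂ) * cquad A Y = 0)
    (h4 : ∀ Y : EuclideanSpace ℝ (Fin (n - 1)), ‖Y‖ = 1 → ⟪Y, η⟫ = 0 →
      mulEC A Y - cquad A Y • toC Y = 0) :
    a = 0 ∧ u = 0 ∧ w = 0 ∧ A = 0 := by
  have hm : 0 < n - 1 := by omega
  have hβ : (ξ : ℂ) - I ≠ 0 := fun h => by simpa using congrArg Complex.im h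
  obtain ⟨ha, hu, rfl⟩ : a = 0 ∧ u = 0 ∧ A = 0 := by
    rcases eq_or_ne η 0 with rfl | hη
    · have ha : a = 0 := by simpa [hβ] using hgauge1
      refine ⟨ha, ?_, eq_zero_of_trace_eq_zero_of_forall_eigen hm (by simpa [ha] using htrace)
        fun Y hY => sub_eq_zero.mp (h4 Y hY (inner_zero_right _))⟩
      ext i
      simpa [cpair_single] using h3 (EuclideanSpace.single i 1) (by simp)
    · set r := ‖η‖
      have hr : 0 < r := norm_pos_iff.mpr hη
      set e := r⁻¹ • η
      have he : ‖e‖ = 1 := norm_smul_inv_norm hη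
      have hηe : η = r • e := (smul_inv_smul₀ hr.ne' η).symm
      have hc : ∀ Y, ⟪Y, η⟫ / (ξ ^ 2 + 1) = r / (ξ ^ 2 + 1) * ⟪Y, e⟫ := fun Y => by
        rw [hηe, real_inner_smul_right]; ring
      have hw : ∀ Y, ((ξ : ℂ) - I) * cpair Y w + r * cpair Y (mulEC A e) = 0 := fun Y => by
        simpa only [hηe, mulEC_smul, cpair_add_right, cpair_smul_right, cpair_zero_right]
          using congrArg (cpair Y) hgauge2
      refine eq_zero_of_reduced_symbol (κ := r / (ξ ^ 2 + 1)) hm hβ (by positivity) hr he htrace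
        (by simpa [hηe] using hgauge1) (fun Y hY => ?_) fun Y hY hYe => ?_
      · have h := h3 Y hY
        rw [hc] at h
        rw [reducedSymbol]
        linear_combination h + ((ξ : ℂ) - I) * ((r / (ξ ^ 2 + 1) * ⟪Y, e⟫ : ℝ) : ℂ) ^ 2 * hw Y
      · refine sub_eq_zero.mp (h4 Y hY ?_)
        rw [hηe, real_inner_smul_right, hYe, mul_zero]
  refine ⟨ha, hu, ?_, rfl⟩
  simpa [hβ] using hgauge2
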